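/- Let ε > 0 and ν ∈ ℝ³. Let Φ : ℝ⁴ → ℝ be twice continuously differentiable near a point p ∈ ℝ⁴ with ∂₁Φ(p) ≠ 0, and let h, e : ℝ⁴ → ℝ³ be differentiable near p. Set N = (1, −∂₂Φ, −∂₃Φ). Assume that at the point p one has ε∂ₜ^Φ h + ∇^Φ × e + ε(∇^Φ · h)ν = 0 and ∂ₜΦ(p) = ⟨ν, N(p)⟩. Then ε∂ₜ⟨h, N⟩ + ∂₂(e₃ + (∂₃Φ)e₁ + ε(∂ₜΦ)h₂) − ∂₃(e₂ + (∂₂Φ)e₁ − ε(∂ₜΦ)h₃) = 0 at p. -/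

import Mathlib

open Filter Topology

/-- Partial derivative `∂ᵢ f` on `ℝ⁴` (coordinates `(t, x₁, x₂, x₃)` indexed by `Fin 4`,
with `∂₀ = ∂ₜ`). -/
noncomputable def pd (i : Fin 4) (f : (Fin 4 → ℝ) → ℝ) (x : Fin 4 → ℝ) : ℝ :=
  fderiv ℝ f x (Pi.single i 1)

/-- Transformed derivative `∂ᵢ^Φ`: `∂ₜ^Φ f = ∂ₜf − (∂ₜΦ/∂₁Φ)∂₁f`,
`∂₁^Φ f = ∂₁f/∂₁Φ`, and `∂ⱼ^Φ f = ∂ⱼf − (∂ⱼΦ/∂₁Φ)∂₁f` for `j = 2, 3`. -/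
noncomputable def pdPhi (Φ : (Fin 4 → ℝ) → ℝ) (i : Fin 4) (f : (Fin 4 → ℝ) → ℝ)
    (x : Fin 4 → ℝ) : ℝ :=
  if i = 1 then pd 1 f x / pd 1 Φ x else pd i f x - pd i Φ x / pd 1 Φ x * pd 1 f x

/-- Transformed divergence `∇^Φ · u = ∂₁^Φu₁ + ∂₂^Φu₂ + ∂₃^Φu₃`. -/
noncomputable def divPhi (Φ : (Fin 4 → ℝ) → ℝ) (u : (Fin 4 → ℝ) → Fin 3 → ℝ)
    (x : Fin 4 → ℝ) : ℝ :=
  pdPhi Φ 1 (fun y => u y 0) x + pdPhi Φ 2 (fun y => u y 1) x + pdPhi Φ 3 (fun y => u y 2) x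

/-- Transformed curl
`∇^Φ × u = (∂₂^Φu₃ − ∂₃^Φu₂, ∂₃^Φu₁ − ∂₁^Φu₃, ∂₁^Φu₂ − ∂₂^Φu₁)`. -/
noncomputable def curlPhi (Φ : (Fin 4 → ℝ) → ℝ) (u : (Fin 4 → ℝ) → Fin 3 → ℝ)
    (x : Fin 4 → ℝ) : Fin 3 → ℝ :=
  ![pdPhi Φ 2 (fun y => u y 2) x - pdPhi Φ 3 (fun y => u y 1) x,
    pdPhi Φ 3 (fun y => u y 0) x - pdPhi Φ 1 (fun y => u y 2) x,
    pdPhi Φ 1 (fun y => u y 1) x - pdPhi Φ 2 (fun y => u y 0) x]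

/-!
Write `R = ε∂ₜ^Φ h + ∇^Φ × e + ε(∇^Φ · h)ν` for the residual of the Maxwell system and
`N = (1, −∂₂Φ, −∂₃Φ)`. For any `C²` function `Φ` and fields `h`, `e` differentiable at `p`,
expanding the left-hand side by the product rule gives the identity
`ε∂ₜ⟨h, N⟩ + ∂₂(…) − ∂₃(…) = ⟨R, N⟩ + ε(∇^Φ · h)(∂ₜΦ − ⟨ν, N⟩)`:
the second derivatives of `Φ` cancel by symmetry of its Hessian, and what remains is a
algebraic identity in the first derivatives. Both terms on the right vanish under the hypotheses.
-/

section PartialDerivatives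

variable {f g : (Fin 4 → ℝ) → ℝ} {x : Fin 4 → ℝ} (i : Fin 4)

lemma pd_add (hf : DifferentiableAt ℝ f x) (hg : DifferentiableAt ℝ g x) :
    pd i (fun y => f y + g y) x = pd i f x + pd i g x := by
  simp [pd, fderiv_fun_add hf hg]

lemma pd_sub (hf : DifferentiableAt ℝ f x) (hg : DifferentiableAt ℝ g x) :
    pd i (fun y => f y - g y) x = pd i f x - pd i g x := by
  simp [pd, fderiv_fun_sub hf hg]

lemma pd_mul (hf : DifferentiableAt ℝ f x) (hg : DifferentiableAt ℝ g x) :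
    pd i (fun y => f y * g y) x = pd i f x * g x + f x * pd i g x := by
  simp [pd, fderiv_fun_mul hf hg]
  ring

lemma pd_const (c : ℝ) : pd i (fun _ => c) x = 0 := by
  simp [pd]

variable {Φ : (Fin 4 → ℝ) → ℝ} {p : Fin 4 → ℝ}

lemma differentiableAt_pd (hΦ : ContDiffAt ℝ 2 Φ p) : DifferentiableAt ℝ (pd i Φ) p :=
  ((hΦ.fderiv_right (m := 1) (by norm_num)).differentiableAt one_ne_zero).clm_apply
    (differentiableAt_const _)

lemma pd_pd_comm (hΦ : ContDiffAt ℝ 2 Φ p) (j : Fin 4) :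
    pd i (pd j Φ) p = pd j (pd i Φ) p := by
  have hd : DifferentiableAt ℝ (fderiv ℝ Φ) p :=
    (hΦ.fderiv_right (m := 1) (by norm_num)).differentiableAt one_ne_zero
  unfold pd
  rw [fderiv_clm_apply hd (differentiableAt_const _), fderiv_clm_apply hd (differentiableAt_const _)]
  simpa using hΦ.isSymmSndFDerivAt (by simp) _ _

end PartialDerivatives

noncomputable def normalVec (Φ : (Fin 4 → ℝ) → ℝ) (x : Fin 4 → ℝ) : Fin 3 → ℝ :=
  ![1, -pd 2 Φ x, -pd 3 Φ x]

noncomputable def maxwellResidual (ε : ℝ) (ν : Fin 3 → ℝ) (Φ : (Fin 4 → ℝ) → ℝ)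
    (h e : (Fin 4 → ℝ) → Fin 3 → ℝ) (x : Fin 4 → ℝ) (i : Fin 3) : ℝ :=
  ε * pdPhi Φ 0 (fun y => h y i) x + curlPhi Φ e x i + ε * divPhi Φ h x * ν i

theorem flux_eq_maxwellResidual_dotProduct_normalVec_add (ε : ℝ) (ν : Fin 3 → ℝ) {Φ : (Fin 4 → ℝ) → ℝ} {h e : (Fin 4 → ℝ) → Fin 3 → ℝ}
    {p : Fin 4 → ℝ} (hΦ : ContDiffAt ℝ 2 Φ p) (hh : DifferentiableAt ℝ h p)
    (he : DifferentiableAt ℝ e p) :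
    ε * pd 0 (fun x => h x 0 - pd 2 Φ x * h x 1 - pd 3 Φ x * h x 2) p
      + pd 2 (fun x => e x 2 + pd 3 Φ x * e x 0 + ε * pd 0 Φ x * h x 1) p
      - pd 3 (fun x => e x 1 + pd 2 Φ x * e x 0 - ε * pd 0 Φ x * h x 2) p
      = maxwellResidual ε ν Φ h e p ⬝ᵥ normalVec Φ p
        + ε * divPhi Φ h p * (pd 0 Φ p - ν ⬝ᵥ normalVec Φ p) := by
  have hpdΦ (i : Fin 4) := differentiableAt_pd i hΦ
  simp (disch := fun_prop) only [pd_add, pd_sub, pd_mul, pd_const]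
  simp only [maxwellResidual, normalVec, pdPhi, curlPhi, divPhi, dotProduct, Fin.sum_univ_three,
    Matrix.cons_val_zero, Matrix.cons_val_one, Matrix.cons_val, Fin.reduceEq, ↓reduceIte]
  linear_combination ε * h p 1 * pd_pd_comm 2 hΦ 0 + ε * h p 2 * pd_pd_comm 3 hΦ 0
    + e p 0 * pd_pd_comm 2 hΦ 3

theorem stmt_11_general (ε : ℝ) (ν : Fin 3 → ℝ)
    (Φ : (Fin 4 → ℝ) → ℝ) (h e : (Fin 4 → ℝ) → Fin 3 → ℝ) (p : Fin 4 → ℝ)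
    (hΦ : ContDiffAt ℝ 2 Φ p)
    (hh : ∀ᶠ x in 𝓝 p, DifferentiableAt ℝ h x)
    (he : ∀ᶠ x in 𝓝 p, DifferentiableAt ℝ e x)
    (heq : ∀ i : Fin 3,
      ε * pdPhi Φ 0 (fun x => h x i) p + curlPhi Φ e p i + ε * divPhi Φ h p * ν i = 0)
    (hbc : pd 0 Φ p = ν 0 - ν 1 * pd 2 Φ p - ν 2 * pd 3 Φ p) :
    ε * pd 0 (fun x => h x 0 - pd 2 Φ x * h x 1 - pd 3 Φ x * h x 2) p
      + pd 2 (fun x => e x 2 + pd 3 Φ x * e x 0 + ε * pd 0 Φ x * h x 1) p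
      - pd 3 (fun x => e x 1 + pd 2 Φ x * e x 0 - ε * pd 0 Φ x * h x 2) p = 0 := by
  have hres : maxwellResidual ε ν Φ h e p = 0 := funext heq
  have hmoving : pd 0 Φ p = ν ⬝ᵥ normalVec Φ p := by
    simp only [hbc, normalVec, dotProduct, Fin.sum_univ_three, Matrix.cons_val_zero,
      Matrix.cons_val_one, Matrix.cons_val]
    ring
  rw [flux_eq_maxwellResidual_dotProduct_normalVec_add ε ν hΦ hh.self_of_nhds he.self_of_nhds, hres, hmoving]
  simp

/-- If at a point `p` the reduced vacuum Maxwell equation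
`ε∂ₜ^Φ h + ∇^Φ × e + ε(∇^Φ · h)ν = 0` holds and `∂ₜΦ = ⟨ν, N⟩` with
`N = (1, −∂₂Φ, −∂₃Φ)`, then
`ε∂ₜ⟨h, N⟩ + ∂₂(e₃ + (∂₃Φ)e₁ + ε(∂ₜΦ)h₂) − ∂₃(e₂ + (∂₂Φ)e₁ − ε(∂ₜΦ)h₃) = 0` at `p`. -/
theorem stmt_11 (ε : ℝ) (hε : 0 < ε) (ν : Fin 3 → ℝ)
    (Φ : (Fin 4 → ℝ) → ℝ) (h e : (Fin 4 → ℝ) → Fin 3 → ℝ) (p : Fin 4 → ℝ)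
    (hΦ : ContDiffAt ℝ 2 Φ p) (hΦ1 : pd 1 Φ p ≠ 0)
    (hh : ∀ᶠ x in 𝓝 p, DifferentiableAt ℝ h x)
    (he : ∀ᶠ x in 𝓝 p, DifferentiableAt ℝ e x)
    (heq : ∀ i : Fin 3,
      ε * pdPhi Φ 0 (fun x => h x i) p + curlPhi Φ e p i + ε * divPhi Φ h p * ν i = 0)
    (hbc : pd 0 Φ p = ν 0 - ν 1 * pd 2 Φ p - ν 2 * pd 3 Φ p) :
    ε * pd 0 (fun x => h x 0 - pd 2 Φ x * h x 1 - pd 3 Φ x * h x 2) p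
      + pd 2 (fun x => e x 2 + pd 3 Φ x * e x 0 + ε * pd 0 Φ x * h x 1) p
      - pd 3 (fun x => e x 1 + pd 2 Φ x * e x 0 - ε * pd 0 Φ x * h x 2) p = 0 :=
  stmt_11_general ε ν Φ h e p hΦ hh he heq hbc
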